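/- Fix β real with 0 < |β| < 1, α = √(1−β²), x₁, x₂ ∈ ℝ with x₁ ≠ (π/α)(1/2+k) for every integer k. Define μ_K(x) = 1/cosh(β(x+x₂)+iα x₁) and μ_B(x) = cosh(β(x+x₂)+iα x₁)/(α² cosh²(β(x+x₂)) + β² sin²(α x₁)). Let B, Bₜ be the breather profile and K, Kₜ the complex kink profile with parameters (β, x₁, x₂). Then for all x ∈ ℝ: (a) μ_K(x) = K′(x)/(2β) and μ_B(x) = (β Bₜ(x) − iα B′(x))/(4α²β²); (b) μ_K′(x) − β·cos(K(x)/2)·μ_K(x) = 0; (c) μ_B′(x) − [((β−iα)/2)·cos((B(x)+K(x))/2) + ((β+iα)/2)·cos((B(x)−K(x))/2)]·μ_B(x) = 0. -/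

import Mathlib

/-!
Since `exp (2 i arctan z) = (1 + i z) / (1 - i z)`, the half kink `K / 2 = 2 arctan (exp θ)`
satisfies `cos (K / 2) = -tanh θ` and `sin (K / 2) = sech θ`, while `K' = 2 β sech θ`;
similarly `cos (B / 2)` and `sin (B / 2)` are rational in `cosh (β (x + x₂))` and `sin (α x₁)`.
The bracket in (c) equals `β cos (B / 2) cos (K / 2) + i α sin (B / 2) sin (K / 2)`, so both ODEs reduce to
identities between hyperbolic functions of `θ = a + i b`, the only nontrivial one being
`cosh a sinh θ - sinh a cosh θ = sinh (i b) = i sin b`.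
-/

open Complex

namespace Complex

variable {z : ℂ}

theorem one_add_mul_I_mul_one_sub_mul_I (z : ℂ) : (1 + z * I) * (1 - z * I) = 1 + z ^ 2 := by
  linear_combination (-z ^ 2) * I_sq

theorem one_add_mul_I_ne_zero (h : 1 + z ^ 2 ≠ 0) : 1 + z * I ≠ 0 :=
  left_ne_zero_of_mul (one_add_mul_I_mul_one_sub_mul_I z ▸ h)

theorem one_sub_mul_I_ne_zero (h : 1 + z ^ 2 ≠ 0) : 1 - z * I ≠ 0 :=
  right_ne_zero_of_mul (one_add_mul_I_mul_one_sub_mul_I z ▸ h)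

theorem exp_two_mul_arctan_mul_I (h : 1 + z ^ 2 ≠ 0) :
    exp (2 * arctan z * I) = (1 + z * I) / (1 - z * I) := by
  set w := (1 + z * I) / (1 - z * I)
  rw [arctan, show 2 * (-I / 2 * log w) * I = log w by linear_combination (-log w) * I_sq,
    exp_log (div_ne_zero (one_add_mul_I_ne_zero h) (one_sub_mul_I_ne_zero h))]

theorem cos_two_mul_arctan (h : 1 + z ^ 2 ≠ 0) :
    cos (2 * arctan z) = (1 - z ^ 2) / (1 + z ^ 2) := by
  rw [cos, neg_mul, exp_neg, exp_two_mul_arctan_mul_I h, inv_div, eq_div_iff h,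
    ← one_add_mul_I_mul_one_sub_mul_I]
  field_simp [one_add_mul_I_ne_zero h, one_sub_mul_I_ne_zero h]
  linear_combination (2 * z ^ 2) * I_sq

theorem sin_two_mul_arctan (h : 1 + z ^ 2 ≠ 0) :
    sin (2 * arctan z) = 2 * z / (1 + z ^ 2) := by
  rw [sin, neg_mul, exp_neg, exp_two_mul_arctan_mul_I h, inv_div, eq_div_iff h,
    ← one_add_mul_I_mul_one_sub_mul_I]
  field_simp [one_add_mul_I_ne_zero h, one_sub_mul_I_ne_zero h]
  linear_combination (-4 * z) * I_sq

/-- The hypothesis says that `z` lies off the branch cuts `(-i∞, -i] ∪ [i, i∞)`. -/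
theorem hasDerivAt_arctan (h : (1 + z * I) / (1 - z * I) ∈ slitPlane) :
    HasDerivAt arctan (1 + z ^ 2)⁻¹ z := by
  obtain ⟨h₁, h₂⟩ := div_ne_zero_iff.1 (slitPlane_ne_zero h)
  have hw : HasDerivAt (fun z => (1 + z * I) / (1 - z * I)) (2 * I / (1 - z * I) ^ 2) z := by
    refine ((((hasDerivAt_id z).mul_const I).const_add 1).div
      (((hasDerivAt_id z).mul_const I).const_sub 1) h₂).congr_deriv ?_
    simp only [id]
    ring
  show HasDerivAt (fun z => -I / 2 * log ((1 + z * I) / (1 - z * I))) _ z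
  refine (((hasDerivAt_log h).comp z hw).const_mul (-I / 2)).congr_deriv ?_
  rw [← one_add_mul_I_mul_one_sub_mul_I, inv_div]
  field_simp
  rw [I_sq]
  ring

theorem div_one_sub_mul_I_mem_slitPlane (hz : z.re ≠ 0) :
    (1 + z * I) / (1 - z * I) ∈ slitPlane := by
  have hden : 1 - z * I ≠ 0 := fun h => hz (by simpa using congrArg im h)
  refine mem_slitPlane_iff.2 (Or.inr ?_)
  rw [div_im]
  simp only [add_im, one_im, mul_im, I_im, mul_one, I_re, mul_zero, add_zero, zero_add, sub_re,
    one_re, mul_re, zero_sub, sub_neg_eq_add, add_re, sub_im, mul_neg, ne_eq]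
  rw [← sub_div, show z.re * (1 + z.im) - -((1 + -z.im) * z.re) = 2 * z.re by ring]
  exact div_ne_zero (mul_ne_zero two_ne_zero hz) (normSq_pos.2 hden).ne'

theorem one_add_sq_ne_zero_of_re_ne_zero (hz : z.re ≠ 0) : 1 + z ^ 2 ≠ 0 := by
  rw [← one_add_mul_I_mul_one_sub_mul_I, ← div_ne_zero_iff.trans mul_ne_zero_iff.symm]
  exact slitPlane_ne_zero (div_one_sub_mul_I_mem_slitPlane hz)

theorem one_add_exp_sq (z : ℂ) : 1 + exp z ^ 2 = 2 * exp z * cosh z := by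
  rw [mul_right_comm, two_cosh, exp_neg]
  field_simp
  ring

theorem one_sub_exp_sq (z : ℂ) : 1 - exp z ^ 2 = -(2 * exp z * sinh z) := by
  rw [mul_right_comm, two_sinh, exp_neg]
  field_simp
  ring

theorem cosh_ne_zero_of_exp_re_ne_zero (h : (exp z).re ≠ 0) : cosh z ≠ 0 :=
  right_ne_zero_of_mul (one_add_exp_sq z ▸ one_add_sq_ne_zero_of_re_ne_zero h)

theorem one_add_exp_sq_ne_zero (h : cosh z ≠ 0) : 1 + exp z ^ 2 ≠ 0 := by
  rw [one_add_exp_sq]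
  exact mul_ne_zero (mul_ne_zero two_ne_zero (exp_ne_zero z)) h

theorem cos_two_mul_arctan_exp (h : cosh z ≠ 0) : cos (2 * arctan (exp z)) = -tanh z := by
  rw [cos_two_mul_arctan (one_add_exp_sq_ne_zero h), one_sub_exp_sq, one_add_exp_sq,
    tanh_eq_sinh_div_cosh]
  field_simp

theorem sin_two_mul_arctan_exp (h : cosh z ≠ 0) : sin (2 * arctan (exp z)) = (cosh z)⁻¹ := by
  rw [sin_two_mul_arctan (one_add_exp_sq_ne_zero h), one_add_exp_sq]
  field_simp

theorem one_add_ofReal_sq_ne_zero (u : ℝ) : 1 + (u : ℂ) ^ 2 ≠ 0 := by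
  exact_mod_cast (by positivity : (0 : ℝ) < 1 + u ^ 2).ne'

end Complex

namespace SineGordon

noncomputable def kink (θ : ℝ → ℂ) (x : ℝ) : ℂ := 4 * arctan (exp (θ x))

noncomputable def kinkIntegratingFactor (θ : ℝ → ℂ) (x : ℝ) : ℂ := (cosh (θ x))⁻¹

variable {θ : ℝ → ℂ} {θ' : ℂ} {x : ℝ}

theorem kink_div_two : kink θ x / 2 = 2 * arctan (exp (θ x)) := by
  rw [kink]; ring

theorem hasDerivAt_kink (hθ : HasDerivAt θ θ' x) (h : (exp (θ x)).re ≠ 0) :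
    HasDerivAt (kink θ) (2 * θ' * kinkIntegratingFactor θ x) x := by
  refine (((hasDerivAt_arctan (div_one_sub_mul_I_mem_slitPlane h)).comp x
    hθ.cexp).const_mul 4).congr_deriv ?_
  have hC := cosh_ne_zero_of_exp_re_ne_zero h
  rw [kinkIntegratingFactor, one_add_exp_sq]
  field_simp
  ring

theorem kinkIntegratingFactor_eq_deriv_kink_div (hθ : HasDerivAt θ θ' x)
    (h : (exp (θ x)).re ≠ 0) (hθ' : θ' ≠ 0) :
    kinkIntegratingFactor θ x = deriv (kink θ) x / (2 * θ') := by
  rw [(hasDerivAt_kink hθ h).deriv]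
  field_simp

theorem hasDerivAt_kinkIntegratingFactor (hθ : HasDerivAt θ θ' x) (h : cosh (θ x) ≠ 0) :
    HasDerivAt (kinkIntegratingFactor θ)
      (θ' * cos (kink θ x / 2) * kinkIntegratingFactor θ x) x := by
  refine ((hasDerivAt_inv h).comp x ((hasDerivAt_cosh (θ x)).comp x hθ)).congr_deriv ?_
  rw [kink_div_two, cos_two_mul_arctan_exp h, tanh_eq_sinh_div_cosh, kinkIntegratingFactor]
  field_simp

/-- In the theorem `a x = β (x + x₂)` and `b = α x₁`. -/
noncomputable def kinkPhase (a : ℝ → ℝ) (b : ℝ) (x : ℝ) : ℂ := a x + b * I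

noncomputable def breatherDenom (α β b : ℝ) (a : ℝ → ℝ) (x : ℝ) : ℝ :=
  α ^ 2 * Real.cosh (a x) ^ 2 + β ^ 2 * Real.sin b ^ 2

noncomputable def breather (α β b : ℝ) (a : ℝ → ℝ) (x : ℝ) : ℝ :=
  4 * Real.arctan (β * Real.sin b / (α * Real.cosh (a x)))

noncomputable def breatherTimeDeriv (α β b : ℝ) (a : ℝ → ℝ) (x : ℝ) : ℝ :=
  4 * α ^ 2 * β * Real.cos b * Real.cosh (a x) / breatherDenom α β b a x

noncomputable def breatherIntegratingFactor (α β b : ℝ) (a : ℝ → ℝ) (x : ℝ) : ℂ :=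
  cosh (kinkPhase a b x) / breatherDenom α β b a x

variable {α β b : ℝ} {a : ℝ → ℝ}

theorem hasDerivAt_kinkPhase (ha : HasDerivAt a β x) : HasDerivAt (kinkPhase a b) β x :=
  ha.ofReal_comp.add_const _

theorem cosh_kinkPhase : cosh (kinkPhase a b x)
    = Real.cosh (a x) * Real.cos b + Real.sinh (a x) * Real.sin b * I := by
  rw [kinkPhase, cosh_add, cosh_mul_I, sinh_mul_I]
  push_cast
  ring

theorem sinh_kinkPhase : sinh (kinkPhase a b x)
    = Real.sinh (a x) * Real.cos b + Real.cosh (a x) * Real.sin b * I := by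
  rw [kinkPhase, sinh_add, cosh_mul_I, sinh_mul_I]
  push_cast
  ring

theorem exp_kinkPhase_re_ne_zero (hb : Real.cos b ≠ 0) : (exp (kinkPhase a b x)).re ≠ 0 := by
  simpa [exp_re, kinkPhase] using hb

theorem breatherDenom_pos (hα : α ≠ 0) : 0 < breatherDenom α β b a x := by
  rw [breatherDenom]
  positivity

theorem hasDerivAt_breatherDenom (ha : HasDerivAt a β x) :
    HasDerivAt (breatherDenom α β b a)
      (2 * α ^ 2 * β * Real.cosh (a x) * Real.sinh (a x)) x := by
  refine ((ha.cosh.pow 2).const_mul _ |>.add_const _).congr_deriv ?_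
  ring

theorem hasDerivAt_breather (hα : α ≠ 0) (ha : HasDerivAt a β x) :
    HasDerivAt (breather α β b a)
      (-(4 * α * β ^ 2 * Real.sin b * Real.sinh (a x)) / breatherDenom α β b a x) x := by
  have hc := (Real.cosh_pos (a x)).ne'
  have hD : breatherDenom α β b a x ≠ 0 := (breatherDenom_pos hα).ne'
  refine ((((hasDerivAt_const x (β * Real.sin b)).div (ha.cosh.const_mul α)
    (mul_ne_zero hα hc)).arctan).const_mul 4).congr_deriv ?_
  simp only [breatherDenom, Pi.div_apply] at hD ⊢
  field_simp
  ring

theorem breather_div_two : (breather α β b a x : ℂ) / 2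
    = 2 * arctan ((β * Real.sin b / (α * Real.cosh (a x)) : ℝ) : ℂ) := by
  rw [breather, ← ofReal_arctan]
  push_cast
  ring

theorem cos_breather_div_two (hα : α ≠ 0) : cos ((breather α β b a x : ℂ) / 2)
    = (α ^ 2 * Real.cosh (a x) ^ 2 - β ^ 2 * Real.sin b ^ 2) / breatherDenom α β b a x := by
  have hc := (Real.cosh_pos (a x)).ne'
  have hD : breatherDenom α β b a x ≠ 0 := (breatherDenom_pos hα).ne'
  have key : (1 - (β * Real.sin b / (α * Real.cosh (a x))) ^ 2)
      / (1 + (β * Real.sin b / (α * Real.cosh (a x))) ^ 2)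
      = (α ^ 2 * Real.cosh (a x) ^ 2 - β ^ 2 * Real.sin b ^ 2) / breatherDenom α β b a x := by
    rw [breatherDenom] at hD ⊢
    field_simp
  rw [breather_div_two, cos_two_mul_arctan (one_add_ofReal_sq_ne_zero _)]
  exact_mod_cast key

theorem sin_breather_div_two (hα : α ≠ 0) : sin ((breather α β b a x : ℂ) / 2)
    = 2 * α * β * Real.sin b * Real.cosh (a x) / breatherDenom α β b a x := by
  have hc := (Real.cosh_pos (a x)).ne'
  have hD : breatherDenom α β b a x ≠ 0 := (breatherDenom_pos hα).ne'
  have key : 2 * (β * Real.sin b / (α * Real.cosh (a x)))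
      / (1 + (β * Real.sin b / (α * Real.cosh (a x))) ^ 2)
      = 2 * α * β * Real.sin b * Real.cosh (a x) / breatherDenom α β b a x := by
    rw [breatherDenom] at hD ⊢
    field_simp
  rw [breather_div_two, sin_two_mul_arctan (one_add_ofReal_sq_ne_zero _)]
  exact_mod_cast key

theorem breatherIntegratingFactor_eq (hα : α ≠ 0) (hβ : β ≠ 0) (ha : HasDerivAt a β x) :
    breatherIntegratingFactor α β b a x
      = (β * (breatherTimeDeriv α β b a x : ℂ)
          - I * α * ((deriv (breather α β b a) x : ℝ) : ℂ))
        / (4 * (α : ℂ) ^ 2 * (β : ℂ) ^ 2) := by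
  have hD : (breatherDenom α β b a x : ℂ) ≠ 0 := by exact_mod_cast (breatherDenom_pos hα).ne'
  have hα' : (α : ℂ) ≠ 0 := ofReal_ne_zero.2 hα
  have hβ' : (β : ℂ) ≠ 0 := ofReal_ne_zero.2 hβ
  rw [(hasDerivAt_breather hα ha).deriv, breatherIntegratingFactor, breatherTimeDeriv,
    cosh_kinkPhase]
  push_cast
  field_simp
  ring

theorem hasDerivAt_breatherIntegratingFactor (hα : α ≠ 0) (hb : Real.cos b ≠ 0)
    (ha : HasDerivAt a β x) :
    HasDerivAt (breatherIntegratingFactor α β b a)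
      ((((β : ℂ) - I * α) / 2
          * cos (((breather α β b a x : ℂ) + kink (kinkPhase a b) x) / 2)
        + ((β : ℂ) + I * α) / 2
          * cos (((breather α β b a x : ℂ) - kink (kinkPhase a b) x) / 2))
        * breatherIntegratingFactor α β b a x) x := by
  have hC : cosh (kinkPhase a b x) ≠ 0 :=
    cosh_ne_zero_of_exp_re_ne_zero (exp_kinkPhase_re_ne_zero hb)
  have hD : (breatherDenom α β b a x : ℂ) ≠ 0 := by exact_mod_cast (breatherDenom_pos hα).ne'
  refine (((hasDerivAt_cosh _).comp x (hasDerivAt_kinkPhase ha)).div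
    (hasDerivAt_breatherDenom ha).ofReal_comp hD).congr_deriv ?_
  have half_angle : ∀ u v : ℂ, ((β : ℂ) - I * α) / 2 * cos ((u + v) / 2)
      + ((β : ℂ) + I * α) / 2 * cos ((u - v) / 2)
      = β * cos (u / 2) * cos (v / 2) + I * α * sin (u / 2) * sin (v / 2) := fun u v => by
    rw [add_div u, sub_div u, cos_add, cos_sub]
    ring
  rw [half_angle, Function.comp_apply, cos_breather_div_two hα, sin_breather_div_two hα,
    kink_div_two, cos_two_mul_arctan_exp hC, sin_two_mul_arctan_exp hC, tanh_eq_sinh_div_cosh,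
    breatherIntegratingFactor]
  field_simp
  rw [sinh_kinkPhase, cosh_kinkPhase, breatherDenom]
  push_cast
  linear_combination
    (2 * α ^ 2 * β * cosh (a x : ℂ) * sin (b : ℂ) * I) * cosh_sq_sub_sinh_sq (a x : ℂ)

end SineGordon

open SineGordon

theorem integrating_factors_breather_kink_general (β x₁ x₂ : ℝ)
    (hβ0 : 0 < |β|) (hβ1 : |β| < 1)
    (α : ℝ) (hα : α = Real.sqrt (1 - β ^ 2))
    (hx₁ : ∀ k : ℤ, x₁ ≠ (Real.pi / α) * (1 / 2 + (k : ℝ)))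
    (θ : ℝ → ℂ)
    (hθ : ∀ x : ℝ, θ x = (β : ℂ) * ((x : ℂ) + (x₂ : ℂ)) + Complex.I * (α : ℂ) * (x₁ : ℂ))
    (μK μB : ℝ → ℂ)
    (hμK : ∀ x : ℝ, μK x = (Complex.cosh (θ x))⁻¹)
    (hμB : ∀ x : ℝ, μB x = Complex.cosh (θ x)
      / ((α ^ 2 * (Real.cosh (β * (x + x₂))) ^ 2
          + β ^ 2 * (Real.sin (α * x₁)) ^ 2 : ℝ) : ℂ))
    (B Bt : ℝ → ℝ)
    (hB : ∀ x : ℝ, B x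
      = 4 * Real.arctan (β * Real.sin (α * x₁) / (α * Real.cosh (β * (x + x₂)))))
    (hBt : ∀ x : ℝ, Bt x
      = 4 * α ^ 2 * β * Real.cos (α * x₁) * Real.cosh (β * (x + x₂))
          / (α ^ 2 * (Real.cosh (β * (x + x₂))) ^ 2 + β ^ 2 * (Real.sin (α * x₁)) ^ 2))
    (K : ℝ → ℂ)
    (hK : ∀ x : ℝ, K x = 4 * Complex.arctan (Complex.exp (θ x))) :
    -- (a)
    (∀ x : ℝ, μK x = deriv K x / (2 * (β : ℂ))) ∧
    (∀ x : ℝ, μB x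
      = ((β : ℂ) * (Bt x : ℂ) - Complex.I * (α : ℂ) * ((deriv B x : ℝ) : ℂ))
          / (4 * (α : ℂ) ^ 2 * (β : ℂ) ^ 2)) ∧
    -- (b)
    (∀ x : ℝ, deriv μK x - (β : ℂ) * Complex.cos (K x / 2) * μK x = 0) ∧
    -- (c)
    (∀ x : ℝ, deriv μB x
      - ((((β : ℂ) - Complex.I * (α : ℂ)) / 2) * Complex.cos (((B x : ℂ) + K x) / 2)
        + (((β : ℂ) + Complex.I * (α : ℂ)) / 2) * Complex.cos (((B x : ℂ) - K x) / 2))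
        * μB x = 0) := by
  have hβ : β ≠ 0 := abs_pos.1 hβ0
  have hα0 : α ≠ 0 := by
    rw [hα]
    exact (Real.sqrt_pos.2 (by nlinarith [abs_lt.1 hβ1])).ne'
  have hb : Real.cos (α * x₁) ≠ 0 := fun h => by
    obtain ⟨k, hk⟩ := Real.cos_eq_zero_iff.1 h
    exact hx₁ k (by field_simp; linear_combination 2 * hk)
  set a : ℝ → ℝ := fun y => β * (y + x₂) with ha_def
  have ha (x : ℝ) : HasDerivAt a β x := by
    simpa using ((hasDerivAt_id x).add_const x₂).const_mul β
  obtain rfl : θ = kinkPhase a (α * x₁) := funext fun y => by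
    rw [hθ, kinkPhase, ha_def]
    push_cast
    ring
  obtain rfl : K = kink (kinkPhase a (α * x₁)) := funext hK
  obtain rfl : μK = kinkIntegratingFactor (kinkPhase a (α * x₁)) := funext hμK
  obtain rfl : μB = breatherIntegratingFactor α β (α * x₁) a := funext hμB
  obtain rfl : B = breather α β (α * x₁) a := funext hB
  obtain rfl : Bt = breatherTimeDeriv α β (α * x₁) a := funext hBt
  have hre (x : ℝ) : (exp (kinkPhase a (α * x₁) x)).re ≠ 0 := exp_kinkPhase_re_ne_zero hb
  refine ⟨fun x => ?_, fun x => breatherIntegratingFactor_eq hα0 hβ (ha x), fun x => ?_,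
    fun x => sub_eq_zero.2 (hasDerivAt_breatherIntegratingFactor hα0 hb (ha x)).deriv⟩
  · exact kinkIntegratingFactor_eq_deriv_kink_div (hasDerivAt_kinkPhase (ha x)) (hre x)
      (ofReal_ne_zero.2 hβ)
  · exact sub_eq_zero.2 (hasDerivAt_kinkIntegratingFactor (hasDerivAt_kinkPhase (ha x))
      (cosh_ne_zero_of_exp_re_ne_zero (hre x))).deriv

/-- **Integrating factors for the linearized Bäcklund ODEs (Lemma 6.2, parts (a)–(c)).**
With `0 < |β| < 1`, `α = √(1−β²)` and `x₁` nondegenerate, the functions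
`μ_K = sech(β(x+x₂)+iαx₁)` and `μ_B = cosh(β(x+x₂)+iαx₁)/(α²cosh²(β(x+x₂))+β²sin²(αx₁))`
satisfy `μ_K = K′/(2β)`, `μ_B = (βBₜ − iαB′)/(4α²β²)`, and the first-order ODEs
`μ_K′ = β cos(K/2) μ_K` and
`μ_B′ = [((β−iα)/2)cos((B+K)/2) + ((β+iα)/2)cos((B−K)/2)] μ_B`. -/
theorem integrating_factors_breather_kink (β x₁ x₂ : ℝ)
    (hβ0 : 0 < |β|) (hβ1 : |β| < 1)
    (α : ℝ) (hα : α = Real.sqrt (1 - β ^ 2))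
    (hx₁ : ∀ k : ℤ, x₁ ≠ (Real.pi / α) * (1 / 2 + (k : ℝ)))
    (θ : ℝ → ℂ)
    (hθ : ∀ x : ℝ, θ x = (β : ℂ) * ((x : ℂ) + (x₂ : ℂ)) + Complex.I * (α : ℂ) * (x₁ : ℂ))
    (μK μB : ℝ → ℂ)
    (hμK : ∀ x : ℝ, μK x = (Complex.cosh (θ x))⁻¹)
    (hμB : ∀ x : ℝ, μB x = Complex.cosh (θ x)
      / ((α ^ 2 * (Real.cosh (β * (x + x₂))) ^ 2
          + β ^ 2 * (Real.sin (α * x₁)) ^ 2 : ℝ) : ℂ))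
    (B Bt : ℝ → ℝ)
    (hB : ∀ x : ℝ, B x
      = 4 * Real.arctan (β * Real.sin (α * x₁) / (α * Real.cosh (β * (x + x₂)))))
    (hBt : ∀ x : ℝ, Bt x
      = 4 * α ^ 2 * β * Real.cos (α * x₁) * Real.cosh (β * (x + x₂))
          / (α ^ 2 * (Real.cosh (β * (x + x₂))) ^ 2 + β ^ 2 * (Real.sin (α * x₁)) ^ 2))
    (K Kt : ℝ → ℂ)
    (hK : ∀ x : ℝ, K x = 4 * Complex.arctan (Complex.exp (θ x)))
    (hKt : ∀ x : ℝ, Kt x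
      = 4 * Complex.I * (α : ℂ) * Complex.exp (θ x) / (1 + Complex.exp (2 * θ x))) :
    -- (a)
    (∀ x : ℝ, μK x = deriv K x / (2 * (β : ℂ))) ∧
    (∀ x : ℝ, μB x
      = ((β : ℂ) * (Bt x : ℂ) - Complex.I * (α : ℂ) * ((deriv B x : ℝ) : ℂ))
          / (4 * (α : ℂ) ^ 2 * (β : ℂ) ^ 2)) ∧
    -- (b)
    (∀ x : ℝ, deriv μK x - (β : ℂ) * Complex.cos (K x / 2) * μK x = 0) ∧
    -- (c)
    (∀ x : ℝ, deriv μB x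
      - ((((β : ℂ) - Complex.I * (α : ℂ)) / 2) * Complex.cos (((B x : ℂ) + K x) / 2)
        + (((β : ℂ) + Complex.I * (α : ℂ)) / 2) * Complex.cos (((B x : ℂ) - K x) / 2))
        * μB x = 0) :=
  integrating_factors_breather_kink_general β x₁ x₂ hβ0 hβ1 α hα hx₁ θ hθ μK μB hμK hμB B Bt hB hBt
    K hK
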